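/- arXiv:2311.03322 — 3 statements merged into one kernel-verified Lean document; each statement's English description precedes it below -/
import Mathlib

section
/- For every real number x ≥ 2, π(x) ≥ ⌊log₂ x⌋ / log₂(⌊log₂ x⌋ + 1), where π(x) is the number of primes p with p ≤ x and log₂ denotes the base-2 logarithm. -/
open Nat

lemma primeCounting_two_pow (N : ℕ) : N ≤ Nat.primeCounting (2 ^ N) := by
  induction N with
  | zero => simp
  | succ n ih =>
    obtain ⟨p, hp, h1, h2⟩ := Nat.exists_prime_lt_and_le_two_mul (2 ^ n) (by positivity)
    have h2' : p ≤ 2 ^ (n + 1) := by rw [pow_succ]; omega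
    have key : Nat.primeCounting (2 ^ n) + 1 ≤ Nat.primeCounting (2 ^ (n + 1)) := by
      unfold Nat.primeCounting Nat.primeCounting'
      have c1 : Nat.count Nat.Prime (2 ^ n + 1) ≤ Nat.count Nat.Prime p :=
        Nat.count_monotone _ (by omega)
      have c2 : Nat.count Nat.Prime (p + 1) = Nat.count Nat.Prime p + 1 := by
        rw [Nat.count_succ, if_pos hp]
      have c3 : Nat.count Nat.Prime (p + 1) ≤ Nat.count Nat.Prime (2 ^ (n + 1) + 1) :=
        Nat.count_monotone _ (by omega)
      omega
    omega

/-- Theorem 3 (main theorem): for every real `x ≥ 2`,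
`π(x) ≥ ⌊log₂ x⌋ / log₂(⌊log₂ x⌋ + 1)`, where `π(x)` is the number of primes
`p ≤ x` (i.e. `Nat.primeCounting ⌊x⌋₊`). -/
theorem primeCounting_lower_bound (x : ℝ) (hx : 2 ≤ x) :
    (⌊Real.logb 2 x⌋ : ℝ) / Real.logb 2 ((⌊Real.logb 2 x⌋ : ℝ) + 1) ≤
      (Nat.primeCounting ⌊x⌋₊ : ℝ) := by
  have hxpos : (0 : ℝ) < x := by linarith
  have hlog1 : (1 : ℝ) ≤ Real.logb 2 x := by
    have := Real.logb_le_logb_of_le (by norm_num : (1:ℝ) < 2) (by norm_num) hx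
    simpa [Real.logb_self_eq_one] using this
  set n : ℤ := ⌊Real.logb 2 x⌋ with hn
  have hn1 : 1 ≤ n := by
    exact_mod_cast Int.le_floor.mpr (by exact_mod_cast hlog1)
  set N : ℕ := n.toNat with hN
  have hNn : (N : ℤ) = n := Int.toNat_of_nonneg (by omega)
  have hNR : (N : ℝ) = (n : ℝ) := by exact_mod_cast congrArg (Int.cast : ℤ → ℝ) hNn
  -- 2^N ≤ x
  have hpow : ((2 : ℝ)) ^ N ≤ x := by
    have h1 : (N : ℝ) ≤ Real.logb 2 x := by
      rw [hNR]; exact Int.floor_le _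
    have := (Real.rpow_le_rpow_left_iff (by norm_num : (1:ℝ) < 2)).mpr h1
    rw [Real.rpow_logb (by norm_num) (by norm_num) hxpos] at this
    calc (2 : ℝ) ^ N = (2 : ℝ) ^ (N : ℝ) := by
          rw [Real.rpow_natCast]
      _ ≤ x := this
  have hfloor : 2 ^ N ≤ ⌊x⌋₊ := Nat.le_floor (by exact_mod_cast hpow)
  have hpi : N ≤ Nat.primeCounting ⌊x⌋₊ :=
    le_trans (primeCounting_two_pow N) (Nat.monotone_primeCounting hfloor)
  have hden : (1 : ℝ) ≤ Real.logb 2 ((n : ℝ) + 1) := by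
    have : (2 : ℝ) ≤ (n : ℝ) + 1 := by
      have : (1 : ℝ) ≤ (n : ℝ) := by exact_mod_cast hn1
      linarith
    have := Real.logb_le_logb_of_le (by norm_num : (1:ℝ) < 2) (by norm_num) this
    simpa [Real.logb_self_eq_one] using this
  have hnn : (0 : ℝ) ≤ (n : ℝ) := by exact_mod_cast (by omega : (0:ℤ) ≤ n)
  calc (n : ℝ) / Real.logb 2 ((n : ℝ) + 1) ≤ (n : ℝ) := div_le_self hnn hden
    _ = (N : ℝ) := hNR.symm
    _ ≤ (Nat.primeCounting ⌊x⌋₊ : ℝ) := by exact_mod_cast hpi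
end

section
/- For every natural number n ≥ 1, 2^h ≤ (h + 1)^{π(n)}, where h = ⌊log₂ n⌋ (the largest k with 2^k ≤ n) and π(n) is the number of primes less than or equal to n. -/
/-- The key inequality `2^h ≤ (h + 1)^π(n)` with `h = ⌊log₂ n⌋ = Nat.log 2 n`,
for every `n ≥ 1`. -/
theorem two_pow_log_le_pow_primeCounting (n : ℕ) (hn : 1 ≤ n) :
    2 ^ (Nat.log 2 n) ≤ (Nat.log 2 n + 1) ^ (Nat.primeCounting n) := by
  set h := Nat.log 2 n with hh
  have hpow : 2 ^ h ≤ n := Nat.pow_log_le_self 2 (by omega)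
  -- π n = card of primes ≤ n
  have hπ : Nat.primeCounting n =
      Fintype.card ((Finset.range (n + 1)).filter Nat.Prime : Finset ℕ) := by
    rw [Fintype.card_coe, Nat.primeCounting, Nat.primeCounting',
      Nat.count_eq_card_filter_range]
  -- build an injection from Fin (2^h) into functions primes → Fin (h+1)
  have key : ∀ m : Fin (2 ^ h), ∀ p : ℕ, (m.val + 1).factorization p ≤ h := by
    intro m p
    by_cases hp : p.Prime
    · have hm1 : (m.val + 1) ≠ 0 := by omega
      have h1 : p ^ (m.val + 1).factorization p ≤ m.val + 1 := Nat.ordProj_le p hm1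
      have h2 : 2 ^ (m.val + 1).factorization p ≤ p ^ (m.val + 1).factorization p :=
        Nat.pow_le_pow_left hp.two_le _
      have h3 : m.val + 1 ≤ 2 ^ h := by have := m.isLt; omega
      exact (Nat.pow_le_pow_iff_right one_lt_two).mp (le_trans h2 (h1.trans h3))
    · simp [Nat.factorization_eq_zero_of_not_prime _ hp]
  let f : Fin (2 ^ h) →
      (((Finset.range (n + 1)).filter Nat.Prime : Finset ℕ) → Fin (h + 1)) :=
    fun m p => ⟨(m.val + 1).factorization p.val, by have := key m p.val; omega⟩
  have finj : Function.Injective f := by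
    intro a b hab
    have hfac : (a.val + 1).factorization = (b.val + 1).factorization := by
      ext p
      by_cases hp : p.Prime
      · by_cases hpn : p ≤ n
        · have hmem : p ∈ (Finset.range (n + 1)).filter Nat.Prime := by
            simp [Finset.mem_filter, Nat.lt_succ_iff, hpn, hp]
          have := congrFun hab ⟨p, hmem⟩
          simpa [f, Fin.ext_iff] using this
        · have za : (a.val + 1).factorization p = 0 := by
            rw [Nat.factorization_eq_zero_iff]
            right; left
            intro hdvd
            have := Nat.le_of_dvd (by omega) hdvd
            have h3 : a.val + 1 ≤ 2 ^ h := by have := a.isLt; omega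
            omega
          have zb : (b.val + 1).factorization p = 0 := by
            rw [Nat.factorization_eq_zero_iff]
            right; left
            intro hdvd
            have := Nat.le_of_dvd (by omega) hdvd
            have h3 : b.val + 1 ≤ 2 ^ h := by have := b.isLt; omega
            omega
          rw [za, zb]
      · simp [Nat.factorization_eq_zero_of_not_prime _ hp]
    have := Nat.factorization_inj (by simp : (a.val + 1) ∈ {x : ℕ | x ≠ 0})
      (by simp : (b.val + 1) ∈ {x : ℕ | x ≠ 0}) hfac
    exact Fin.ext (by omega)
  have hcard := Fintype.card_le_of_injective f finj
  simpa [Fintype.card_fun, hπ] using hcard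
end

section
/- For every natural number n ≥ 1, n ≤ C(h + w, w), where h = ⌊log₂ n⌋ (the largest k with 2^k ≤ n), w = π(n) is the number of primes less than or equal to n, and C denotes the binomial coefficient. -/
/-!
Send `m ∈ [1, n]` to the multiset of its prime factors. This is injective, the factors are primes
`≤ n`, and there are at most `⌊log₂ n⌋` of them since each is at least `2`. Padding such a multiset
with a new symbol up to size exactly `h = ⌊log₂ n⌋` embeds these multisets into the multisets of
size `h` over `π(n) + 1` symbols, of which there are `C(h + π(n), π(n))` by stars and bars.
-/

open Finset

theorem Finset.card_sym {α : Type*} [DecidableEq α] (s : Finset α) (k : ℕ) :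
    #(s.sym k) = Nat.multichoose #s k := by
  nth_rw 1 [← s.attach_map_val]
  rw [sym_map, card_map, attach_eq_univ, sym_univ, card_univ, Sym.card_sym_eq_multichoose,
    Fintype.card_coe]

theorem Multiset.filterMap_id_map_some_add_replicate_none {α : Type*} (M : Multiset α) (k : ℕ) :
    (M.map some + Multiset.replicate k none).filterMap id = M := by
  induction k with
  | zero => simp [Multiset.filterMap_map]
  | succ k ih => simpa [Multiset.replicate_succ, Multiset.filterMap_add] using ih

theorem Finset.card_le_choose_of_forall_card_le {α : Type*} [DecidableEq α] (s : Finset α)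
    (S : Finset (Multiset α)) (h : ℕ) (hs : ∀ M ∈ S, ∀ a ∈ M, a ∈ s)
    (hh : ∀ M ∈ S, Multiset.card M ≤ h) :
    #S ≤ (h + #s).choose #s := by
  let pad (M : Multiset α) : Multiset (Option α) := M.map some + .replicate (h - M.card) none
  have hpad : ∀ M ∈ S, pad M ∈ (s.insertNone.sym h).image Sym.toMultiset := by
    intro M hM
    refine mem_image.2 ⟨⟨pad M, by simp [pad, hh M hM]⟩, mem_sym_iff.2 ?_, rfl⟩
    intro a ha
    rcases Multiset.mem_add.1 ha with ha | ha
    · obtain ⟨b, hb, rfl⟩ := Multiset.mem_map.1 ha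
      exact mem_insertNone.2 fun _ h => Option.some_inj.1 h ▸ hs M hM b hb
    · rw [Multiset.eq_of_mem_replicate ha]
      exact mem_insertNone.2 fun _ h => nomatch h
  calc #S ≤ #((s.insertNone.sym h).image Sym.toMultiset) :=
        card_le_card_of_injOn pad hpad fun M _ N _ hMN => by
          rw [← Multiset.filterMap_id_map_some_add_replicate_none M (h - M.card),
            ← Multiset.filterMap_id_map_some_add_replicate_none N (h - N.card)]
          exact congrArg (Multiset.filterMap id) hMN
    _ ≤ #(s.insertNone.sym h) := card_image_le
    _ = (h + #s).choose #s := by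
      rw [card_sym, card_insertNone, Nat.multichoose_eq, show #s + 1 + h - 1 = h + #s by omega,
        Nat.choose_symm_add]

theorem Nat.two_pow_length_primeFactorsList_le {m : ℕ} (hm : m ≠ 0) :
    2 ^ m.primeFactorsList.length ≤ m := by
  conv_rhs => rw [← Nat.prod_primeFactorsList hm]
  exact List.pow_card_le_prod _ _ fun p hp => (Nat.prime_of_mem_primeFactorsList hp).two_le

theorem Nat.length_primeFactorsList_le_log (m : ℕ) : m.primeFactorsList.length ≤ Nat.log 2 m := by
  rcases eq_or_ne m 0 with rfl | hm
  · simp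
  · exact Nat.le_log_of_pow_le one_lt_two (Nat.two_pow_length_primeFactorsList_le hm)

theorem Nat.coe_primeFactorsList_injOn :
    Set.InjOn (fun m : ℕ => (m.primeFactorsList : Multiset ℕ)) {m | m ≠ 0} :=
  fun _ ha _ hb hab => Nat.eq_of_perm_primeFactorsList ha hb (Multiset.coe_eq_coe.1 hab)

theorem le_choose_log_add_primeCounting_general (n : ℕ) :
    n ≤ (Nat.log 2 n + Nat.primeCounting n).choose (Nat.primeCounting n) := by
  let S := (Icc 1 n).image fun m => (m.primeFactorsList : Multiset ℕ)
  calc n = #S := by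
        rw [card_image_of_injOn, Nat.card_Icc, Nat.add_sub_cancel]
        exact Nat.coe_primeFactorsList_injOn.mono fun m hm =>
          Nat.one_le_iff_ne_zero.1 (mem_Icc.1 hm).1
    _ ≤ (Nat.log 2 n + #(n + 1).primesBelow).choose #(n + 1).primesBelow := by
        refine card_le_choose_of_forall_card_le _ S _ ?_ ?_ <;>
          simp only [S, forall_mem_image, mem_Icc, Multiset.mem_coe, Multiset.coe_card]
        · intro m ⟨_, hmn⟩ p hp
          exact Nat.mem_primesBelow.2
            ⟨Nat.lt_succ_of_le ((Nat.le_of_mem_primeFactorsList hp).trans hmn),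
              Nat.prime_of_mem_primeFactorsList hp⟩
        · exact fun m ⟨_, hmn⟩ =>
            (Nat.length_primeFactorsList_le_log m).trans (Nat.log_mono_right hmn)
    _ = (Nat.log 2 n + Nat.primeCounting n).choose (Nat.primeCounting n) := by
        rw [Nat.primesBelow_card_eq_primeCounting']; rfl

/-- For every `n ≥ 1`, `n ≤ C(h + w, w)` where `h = ⌊log₂ n⌋ = Nat.log 2 n`
and `w = π(n)` is the number of primes `≤ n`. -/
theorem le_choose_log_add_primeCounting (n : ℕ) (hn : 1 ≤ n) :
    n ≤ (Nat.log 2 n + Nat.primeCounting n).choose (Nat.primeCounting n) :=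
  le_choose_log_add_primeCounting_general n
end
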